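/- Let H : ℝ → ℝ be continuous and coercive, define H⁻(p) = inf_{q ≤ p} H(q), and let A₀ be the set of all points p ∈ ℝ such that p⁻ = p < p⁺ and for every q ∈ ℝ with (q⁻, q⁺) ∩ (p, p⁺) ≠ ∅ one has H(q) ≥ H(p). Then A₀ is a set limiter for H and the A₀-limited flux function satisfies F_{A₀} = H⁻ on ℝ. -/

import Mathlib

open Set Filter Topology

/-- `p⁻ = sup {q < p : H(q) ≥ H(p)}`. -/
noncomputable def pminus (H : ℝ → ℝ) (p : ℝ) : ℝ :=
  sSup {q : ℝ | q < p ∧ H p ≤ H q}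

/-- `p⁺ = inf {q > p : H(q) ≤ H(p)}`, with `inf ∅ = +∞` (extended reals). -/
noncomputable def pplus (H : ℝ → ℝ) (p : ℝ) : EReal :=
  sInf (Real.toEReal '' {q : ℝ | p < q ∧ H q ≤ H p})

/-- `H(p) → +∞` as `|p| → +∞`. -/
def Coercive (H : ℝ → ℝ) : Prop :=
  Tendsto H atTop atTop ∧ Tendsto H atBot atTop

/-- `F(p) → +∞` as `p → -∞`. -/
def SemiCoercive (F : ℝ → ℝ) : Prop := Tendsto F atBot atTop

/-- the open interval `(a⁻, a⁺)` (upper endpoint possibly `+∞`). -/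
def ooMM (H : ℝ → ℝ) (a : ℝ) : Set ℝ :=
  {r : ℝ | pminus H a < r ∧ (r : EReal) < pplus H a}

/-- the open interval `(p, p⁺)` (upper endpoint possibly `+∞`). -/
def ooUp (H : ℝ → ℝ) (p : ℝ) : Set ℝ :=
  {r : ℝ | p < r ∧ (r : EReal) < pplus H p}

/-- the closed interval `[a⁻, a⁺]` (upper endpoint possibly `+∞`). -/
def ccMM (H : ℝ → ℝ) (a : ℝ) : Set ℝ :=
  {r : ℝ | pminus H a ≤ r ∧ (r : EReal) ≤ pplus H a}

/-- `A` is a set limiter for `H`. -/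
def IsSetLimiter (H : ℝ → ℝ) (A : Set ℝ) : Prop :=
  (∀ a ∈ A, (pminus H a : EReal) ≠ pplus H a) ∧
  (∀ a ∈ A, ∀ b ∈ A, a < b → H b ≤ H a) ∧
  (∀ p : ℝ, pminus H p < p → ∃ a ∈ A, (Ioo (pminus H p) p ∩ ooMM H a).Nonempty) ∧
  (∀ p : ℝ, (p : EReal) < pplus H p → ∃ a ∈ A, (ooUp H p ∩ ooMM H a).Nonempty)

open Classical in
/-- The `A`-limited flux function `F_A`: equal to `H(a)` on `[a⁻, a⁺]` for `a ∈ A`,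
and to `H` elsewhere. -/
noncomputable def limFlux (H : ℝ → ℝ) (A : Set ℝ) (p : ℝ) : ℝ :=
  if h : ∃ a, a ∈ A ∧ p ∈ ccMM H a then H h.choose else H p

/-- Condition (S) in the definition of `A_F`. -/
def CondS (H F : ℝ → ℝ) (p : ℝ) : Prop :=
  pminus H p ≠ p ∧ H p ≤ F p ∧
    ∀ q : ℝ, H q ≤ F q → (ooMM H q ∩ Ioo (pminus H p) p).Nonempty → H q ≤ H p

/-- Condition (T) in the definition of `A_F`. -/
def CondT (H F : ℝ → ℝ) (p : ℝ) : Prop :=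
  (p : EReal) ≠ pplus H p ∧ F p ≤ H p ∧
    ∀ q : ℝ, F q ≤ H q → (ooMM H q ∩ ooUp H p).Nonempty → H p ≤ H q

/-- The set `A_F` associated with a boundary function `F`. -/
def limiterOf (H F : ℝ → ℝ) : Set ℝ := {p : ℝ | CondS H F p ∨ CondT H F p}

/-- `H⁻(p) = inf_{q ≤ p} H(q)`. -/
noncomputable def Hminus (H : ℝ → ℝ) (p : ℝ) : ℝ := sInf (H '' Iic p)

/-- The set `A₀` of points `p` with `p⁻ = p < p⁺` such that every `q` with
`(q⁻, q⁺) ∩ (p, p⁺) ≠ ∅` satisfies `H(q) ≥ H(p)`. -/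
def setA0 (H : ℝ → ℝ) : Set ℝ :=
  {p : ℝ | pminus H p = p ∧ (p : EReal) < pplus H p ∧
    ∀ q : ℝ, (ooMM H q ∩ ooUp H p).Nonempty → H p ≤ H q}

section aux0
variable {H : ℝ → ℝ}

lemma pminus' (H : ℝ → ℝ) (p : ℝ): pminus H p = sSup {q : ℝ | q < p ∧ H p ≤ H q} := rfl

lemma sminus_bdd (H : ℝ → ℝ) (p : ℝ) : BddAbove {q : ℝ | q < p ∧ H p ≤ H q} :=
  ⟨p, fun _ hq => hq.1.le⟩

lemma sminus_nonempty (hcoer : Coercive H) (p : ℝ) :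
    {q : ℝ | q < p ∧ H p ≤ H q}.Nonempty := by
  obtain ⟨q, hq1, hq2⟩ := ((eventually_lt_atBot p).and (hcoer.2.eventually_ge_atTop (H p))).exists
  exact ⟨q, hq1, hq2⟩

lemma pminus_le (hcoer : Coercive H) (p : ℝ) : pminus H p ≤ p :=
  csSup_le (sminus_nonempty hcoer p) (fun _ hq => hq.1.le)

lemma H_lt_of_between {p q : ℝ} (h1 : pminus H p < q) (h2 : q < p) : H q < H p := by
  by_contra h
  push_neg at h
  exact absurd (le_csSup (sminus_bdd H p) ⟨h2, h⟩) (not_le.mpr h1)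

lemma coe_le_pplus (H : ℝ → ℝ) (p : ℝ) : (p : EReal) ≤ pplus H p := by
  refine le_sInf ?_
  rintro x ⟨q, ⟨h1, _⟩, rfl⟩
  exact_mod_cast h1.le

lemma H_lt_of_lt_pplus {p r : ℝ} (h1 : p < r) (h2 : (r : EReal) < pplus H p) : H p < H r := by
  by_contra h
  push_neg at h
  have hm : (r : EReal) ∈ Real.toEReal '' {q : ℝ | p < q ∧ H q ≤ H p} := ⟨r, ⟨h1, h⟩, rfl⟩
  exact absurd (sInf_le hm) (not_le.mpr h2)

lemma exists_of_pplus_lt {p b : ℝ} (h : pplus H p < (b : EReal)) :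
    ∃ q, p < q ∧ H q ≤ H p ∧ q < b := by
  obtain ⟨x, hx, hlt⟩ := sInf_lt_iff.mp h
  obtain ⟨q, hq, rfl⟩ := hx
  exact ⟨q, hq.1, hq.2, by exact_mod_cast hlt⟩

lemma global_bdd (hH : Continuous H) (hcoer : Coercive H) : ∃ B, ∀ x, B ≤ H x := by
  obtain ⟨M₁, hM₁⟩ := eventually_atTop.1 (hcoer.1.eventually_ge_atTop 0)
  obtain ⟨M₂, hM₂⟩ := eventually_atBot.1 (hcoer.2.eventually_ge_atTop 0)
  obtain ⟨B, hB⟩ := ((isCompact_Icc (a := M₂) (b := M₁)).image_of_continuousOn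
    hH.continuousOn).bddBelow
  refine ⟨min B 0, fun x => ?_⟩
  rcases le_or_gt x M₂ with h | h
  · exact le_trans (min_le_right _ _) (hM₂ x h)
  rcases le_or_gt x M₁ with h' | h'
  · exact le_trans (min_le_left _ _) (hB ⟨x, ⟨h.le, h'⟩, rfl⟩)
  · exact le_trans (min_le_right _ _) (hM₁ x h'.le)

lemma Hminus_le (hb : ∃ B, ∀ x, B ≤ H x) {q p : ℝ} (h : q ≤ p) : Hminus H p ≤ H q := by
  obtain ⟨B, hB⟩ := hb
  exact csInf_le ⟨B, by rintro _ ⟨x, _, rfl⟩; exact hB x⟩ ⟨q, h, rfl⟩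

lemma Hminus_anti (hb : ∃ B, ∀ x, B ≤ H x) {p p' : ℝ} (h : p ≤ p') :
    Hminus H p' ≤ Hminus H p := by
  obtain ⟨B, hB⟩ := hb
  exact csInf_le_csInf ⟨B, by rintro _ ⟨x, _, rfl⟩; exact hB x⟩
    ⟨H p, p, mem_Iic.mpr le_rfl, rfl⟩ (image_mono (Iic_subset_Iic.mpr h))

lemma CL (hH : Continuous H) {c M : ℝ}
    (h : ∀ ε > (0:ℝ), ∃ q, c ≤ q ∧ q < c + ε ∧ H q ≤ M) : H c ≤ M := by
  have hc : c ∈ closure {x | H x ≤ M} := by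
    rw [Metric.mem_closure_iff]
    intro ε hε
    obtain ⟨q, h1, h2, h3⟩ := h ε hε
    refine ⟨q, h3, ?_⟩
    rw [Real.dist_eq, abs_sub_comm, abs_of_nonneg (by linarith)]
    linarith
  rwa [(isClosed_le hH continuous_const).closure_eq] at hc

lemma CL' (hH : Continuous H) {a c : ℝ} (hac : a < c)
    (hs : ∀ s, a < s → s < c → H a ≤ H s) : H a ≤ H c := by
  have h1 : c ∈ closure (Ioo a c) := by
    rw [closure_Ioo hac.ne]; exact ⟨hac.le, le_rfl⟩
  have h2 : closure (Ioo a c) ⊆ {x | H a ≤ H x} :=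
    (isClosed_le continuous_const hH).closure_subset_iff.mpr (fun s hs' => hs s hs'.1 hs'.2)
  exact h2 h1

lemma exists_lastMin (hH : Continuous H) (hcoer : Coercive H) (p : ℝ) :
    ∃ a, a ≤ p ∧ H a = Hminus H p ∧ ∀ q, a < q → q ≤ p → Hminus H p < H q := by
  obtain ⟨M, hM⟩ := eventually_atBot.1 (hcoer.2.eventually_ge_atTop (H p))
  have hMp : min M p ≤ p := min_le_right _ _
  obtain ⟨x₀, hx₀s, hx₀⟩ := isCompact_Icc.exists_isMinOn (nonempty_Icc.mpr hMp)
    hH.continuousOn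
  have hmin : ∀ q ≤ p, H x₀ ≤ H q := by
    intro q hq
    rcases le_or_gt q (min M p) with h | h
    · calc H x₀ ≤ H p := isMinOn_iff.mp hx₀ p ⟨hMp, le_rfl⟩
        _ ≤ H q := hM q (le_trans h (min_le_left _ _))
    · exact isMinOn_iff.mp hx₀ q ⟨h.le, hq⟩
  have hHm : Hminus H p = H x₀ := by
    refine le_antisymm (csInf_le ⟨H x₀, ?_⟩ ⟨x₀, hx₀s.2, rfl⟩) (le_csInf ⟨H p, p, mem_Iic.mpr le_rfl, rfl⟩ ?_)
    · rintro _ ⟨q, hq, rfl⟩; exact hmin q hq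
    · rintro _ ⟨q, hq, rfl⟩; exact hmin q hq
  have hTc : IsClosed (Iic p ∩ H ⁻¹' {H x₀}) :=
    isClosed_Iic.inter (isClosed_singleton.preimage hH)
  have hTn : (Iic p ∩ H ⁻¹' {H x₀}).Nonempty := ⟨x₀, hx₀s.2, rfl⟩
  have hTb : BddAbove (Iic p ∩ H ⁻¹' {H x₀}) := ⟨p, fun _ hq => hq.1⟩
  have haT := hTc.csSup_mem hTn hTb
  refine ⟨sSup (Iic p ∩ H ⁻¹' {H x₀}), haT.1, by rw [hHm]; exact haT.2, ?_⟩
  intro q hq1 hq2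
  rcases (hHm ▸ hmin q hq2 : Hminus H p ≤ H q).lt_or_eq with h | h
  · exact h
  · exact absurd (le_csSup hTb ⟨hq2, by simp only [mem_preimage, mem_singleton_iff]; rw [← h]; exact hHm⟩) (not_le.mpr hq1)

lemma exists_good (hH : Continuous H) (hcoer : Coercive H) (hb : ∃ B, ∀ x, B ≤ H x)
    {p : ℝ} (hp : Hminus H p < H p) :
    ∃ a, a < p ∧ H a = Hminus H a ∧ ((p : ℝ) : EReal) < pplus H a ∧ H a = Hminus H p := by
  obtain ⟨a, hap, ha, hlast⟩ := exists_lastMin hH hcoer p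
  have hap' : a < p := lt_of_le_of_ne hap (fun h => by rw [h] at ha; exact hp.ne' ha)
  have hpp : ((p : ℝ) : EReal) < pplus H a := by
    by_contra h
    push_neg at h
    have hc : H p ≤ Hminus H p := by
      apply CL hH
      intro ε hε
      have hlt : pplus H a < ((p + ε : ℝ) : EReal) :=
        lt_of_le_of_lt h (by exact_mod_cast lt_add_of_pos_right p hε)
      obtain ⟨q, hq1, hq2, hq3⟩ := exists_of_pplus_lt hlt
      have hqp : p < q := by
        by_contra h'
        push_neg at h'
        exact absurd (hq2.trans_lt (ha ▸ hlast q hq1 h')) (lt_irrefl _)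
      exact ⟨q, hqp.le, hq3, hq2.trans_eq ha⟩
    exact absurd hc (not_le.mpr hp)
  exact ⟨a, hap', le_antisymm (ha.trans_le (Hminus_anti hb hap)) (Hminus_le hb le_rfl),
    hpp, ha⟩

lemma cond_of (hH : Continuous H) (hcoer : Coercive H) (hb : ∃ B, ∀ x, B ≤ H x)
    {a : ℝ} (ha : H a = Hminus H a) :
    ∀ q : ℝ, (ooMM H q ∩ ooUp H a).Nonempty → H a ≤ H q := by
  rintro q ⟨r, ⟨hr1, hr2⟩, hr3, hr4⟩
  rcases le_or_gt q a with h | h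
  · exact ha.trans_le ((Hminus_anti hb h).trans (Hminus_le hb le_rfl))
  · rcases lt_or_ge ((q : ℝ) : EReal) (pplus H a) with h' | h'
    · exact (H_lt_of_lt_pplus h h').le
    · have hrq : r < q := by exact_mod_cast hr4.trans_le h'
      by_contra hc
      push_neg at hc
      have hHr : H a < H r := H_lt_of_lt_pplus hr3 hr4
      obtain ⟨s, hs, hHs⟩ := intermediate_value_Icc' hrq.le hH.continuousOn ⟨hc.le, hHr.le⟩
      have hsq : s < q := lt_of_le_of_ne hs.2 (fun he => absurd (he ▸ hHs) hc.ne)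
      have hsp : s ≤ pminus H q := le_csSup (sminus_bdd H q) ⟨hsq, by rw [hHs]; exact hc.le⟩
      have : r ≤ s := hs.1
      linarith

lemma mem_setA0 (hH : Continuous H) (hcoer : Coercive H) (hb : ∃ B, ∀ x, B ≤ H x)
    {a : ℝ} (ha : H a = Hminus H a) (ha2 : ((a : ℝ) : EReal) < pplus H a) : a ∈ setA0 H := by
  refine ⟨le_antisymm (pminus_le hcoer a) ?_, ha2, cond_of hH hcoer hb ha⟩
  by_contra h
  push_neg at h
  obtain ⟨w, hw1, hw2⟩ := exists_between h
  have hw : H a ≤ H w := ha.trans_le ((Hminus_anti hb hw2.le).trans (Hminus_le hb le_rfl))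
  exact absurd (le_csSup (sminus_bdd H a) ⟨hw2, hw⟩) (not_le.mpr hw1)

lemma pick2 {p : ℝ} {x y : EReal} (hx : (p : EReal) < x) (hy : (p : EReal) < y) :
    ∃ r : ℝ, p < r ∧ (r : EReal) < x ∧ (r : EReal) < y := by
  obtain ⟨r, hr1, hr2⟩ := EReal.exists_between_coe_real (lt_min hx hy)
  exact ⟨r, by exact_mod_cast hr1, hr2.trans_le (min_le_left _ _),
    hr2.trans_le (min_le_right _ _)⟩

lemma A0_eq_min (hH : Continuous H) (hcoer : Coercive H) (hb : ∃ B, ∀ x, B ≤ H x)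
    {a : ℝ} (ha : a ∈ setA0 H) : H a = Hminus H a := by
  by_contra h
  have hlt : Hminus H a < H a := lt_of_le_of_ne (Hminus_le hb le_rfl) (Ne.symm h)
  obtain ⟨b, hba, hbb, hbp, hbm⟩ := exists_good hH hcoer hb hlt
  obtain ⟨r, hr1, hr2, hr3⟩ := pick2 hbp ha.2.1
  have hcond := ha.2.2 b ⟨r, ⟨lt_of_le_of_lt (pminus_le hcoer b) (hba.trans hr1), hr2⟩, hr1, hr3⟩
  rw [hbm] at hcond
  exact absurd hcond (not_le.mpr hlt)

lemma flux_val (hH : Continuous H) (hcoer : Coercive H) (hb : ∃ B, ∀ x, B ≤ H x)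
    {a p : ℝ} (ha : a ∈ setA0 H) (hcc : p ∈ ccMM H a) : H a = Hminus H p := by
  have hap : a ≤ p := ha.1 ▸ hcc.1
  have haa : H a = Hminus H a := A0_eq_min hH hcoer hb ha
  refine le_antisymm (le_csInf ⟨H p, p, mem_Iic.mpr le_rfl, rfl⟩ ?_) ((Hminus_anti hb hap).trans_eq haa.symm)
  rintro _ ⟨q, (hq : q ≤ p), rfl⟩
  rcases le_or_gt q a with h | h
  · exact haa.trans_le ((Hminus_anti hb h).trans (Hminus_le hb le_rfl))
  · have hq' : ((q : ℝ) : EReal) ≤ pplus H a := le_trans (by exact_mod_cast hq) hcc.2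
    rcases hq'.lt_or_eq with h' | h'
    · exact (H_lt_of_lt_pplus h h').le
    · refine CL' hH h (fun s hs1 hs2 => (H_lt_of_lt_pplus hs1 ?_).le)
      rw [← h']
      exact_mod_cast hs2

end aux0

theorem stmt19 (H : ℝ → ℝ) (hH : Continuous H) (hcoer : Coercive H) :
    IsSetLimiter H (setA0 H) ∧ ∀ p : ℝ, limFlux H (setA0 H) p = Hminus H p := by
  have hb : ∃ B, ∀ x, B ≤ H x := global_bdd hH hcoer
  constructor
  · refine ⟨?_, ?_, ?_, ?_⟩
    · intro a ha
      rw [ha.1]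
      exact ne_of_lt ha.2.1
    · intro a ha b hbm hab
      calc H b = Hminus H b := A0_eq_min hH hcoer hb hbm
        _ ≤ Hminus H a := Hminus_anti hb hab.le
        _ = H a := (A0_eq_min hH hcoer hb ha).symm
    · intro p hp
      obtain ⟨w, hw1, hw2⟩ := exists_between hp
      have hmlt : Hminus H p < H p :=
        lt_of_le_of_lt (Hminus_le hb hw2.le) (H_lt_of_between hw1 hw2)
      obtain ⟨a, hap, haa, happ, _⟩ := exists_good hH hcoer hb hmlt
      have haA : a ∈ setA0 H := mem_setA0 hH hcoer hb haa
        (lt_trans (by exact_mod_cast hap) happ)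
      obtain ⟨r, hr1, hr2⟩ := exists_between (max_lt hap hp : max a (pminus H p) < p)
      refine ⟨a, haA, r, ⟨lt_of_le_of_lt (le_max_right _ _) hr1, hr2⟩,
        lt_of_le_of_lt (pminus_le hcoer a) (lt_of_le_of_lt (le_max_left _ _) hr1), ?_⟩
      exact lt_trans (by exact_mod_cast hr2) happ
    · intro p hp
      rcases (Hminus_le hb (le_refl p)).lt_or_eq with hlt | he
      · obtain ⟨a, hap, haa, happ, _⟩ := exists_good hH hcoer hb hlt
        have haA : a ∈ setA0 H := mem_setA0 hH hcoer hb haa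
          (lt_trans (by exact_mod_cast hap) happ)
        obtain ⟨r, hr1, hr2, hr3⟩ := pick2 hp happ
        exact ⟨a, haA, r, ⟨hr1, hr2⟩,
          lt_of_le_of_lt (pminus_le hcoer a) (lt_trans hap hr1), hr3⟩
      · refine ⟨p, mem_setA0 hH hcoer hb he.symm hp, ?_⟩
        obtain ⟨r, hr1, hr2, hr3⟩ := pick2 hp hp
        exact ⟨r, ⟨hr1, hr2⟩, lt_of_le_of_lt (pminus_le hcoer p) hr1, hr3⟩
  · intro p
    by_cases hex : ∃ a, a ∈ setA0 H ∧ p ∈ ccMM H a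
    · rw [limFlux, dif_pos hex]
      exact flux_val hH hcoer hb hex.choose_spec.1 hex.choose_spec.2
    · rw [limFlux, dif_neg hex]
      by_contra hne
      have hlt : Hminus H p < H p := lt_of_le_of_ne (Hminus_le hb le_rfl) (Ne.symm hne)
      obtain ⟨a, hap, haa, happ, _⟩ := exists_good hH hcoer hb hlt
      exact hex ⟨a, mem_setA0 hH hcoer hb haa (lt_trans (by exact_mod_cast hap) happ),
        (pminus_le hcoer a).trans hap.le, happ.le⟩
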